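/- The element z1 := e1·e2·e3 + (1/(q^2-1))·e1·z + (1/(q^4-1))·e3^2 is central in U_q^+(B_2), i.e., z1 commutes with each of the generators e1, e2, e3 and z. -/
import Mathlib


noncomputable section

open MulOpposite

/-- The defining relations of `U_q^+(B_2)` on the free algebra on generators
`e1 = ι 0`, `e2 = ι 1`, `e3 = ι 2`, `z = ι 3`. -/
inductive UqB2Rel (K : Type*) [Field K] (q : K) :
    FreeAlgebra K (Fin 4) → FreeAlgebra K (Fin 4) → Prop
  | e1z : UqB2Rel K q (FreeAlgebra.ι K 0 * FreeAlgebra.ι K 3)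
      (FreeAlgebra.ι K 3 * FreeAlgebra.ι K 0)
  | e2z : UqB2Rel K q (FreeAlgebra.ι K 1 * FreeAlgebra.ι K 3)
      (FreeAlgebra.ι K 3 * FreeAlgebra.ι K 1)
  | e3z : UqB2Rel K q (FreeAlgebra.ι K 2 * FreeAlgebra.ι K 3)
      (FreeAlgebra.ι K 3 * FreeAlgebra.ι K 2)
  | e1e3 : UqB2Rel K q (FreeAlgebra.ι K 0 * FreeAlgebra.ι K 2)
      (q⁻¹ ^ 2 • (FreeAlgebra.ι K 2 * FreeAlgebra.ι K 0))
  | e2e3 : UqB2Rel K q (FreeAlgebra.ι K 1 * FreeAlgebra.ι K 2)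
      (q ^ 2 • (FreeAlgebra.ι K 2 * FreeAlgebra.ι K 1) + FreeAlgebra.ι K 3)
  | e2e1 : UqB2Rel K q (FreeAlgebra.ι K 1 * FreeAlgebra.ι K 0)
      (q⁻¹ ^ 2 • (FreeAlgebra.ι K 0 * FreeAlgebra.ι K 1) - q⁻¹ ^ 2 • FreeAlgebra.ι K 2)

/-- `U_q^+(B_2)`, presented by generators `e1, e2, e3, z` and the relations above. -/
abbrev UqB2 (K : Type*) [Field K] (q : K) : Type _ := RingQuot (UqB2Rel K q)

variable (K : Type*) [Field K] (q : K)

/-- The generator `e1` of `U_q^+(B_2)`. -/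
def Ue1 : UqB2 K q := RingQuot.mkAlgHom K (UqB2Rel K q) (FreeAlgebra.ι K 0)
/-- The generator `e2` of `U_q^+(B_2)`. -/
def Ue2 : UqB2 K q := RingQuot.mkAlgHom K (UqB2Rel K q) (FreeAlgebra.ι K 1)
/-- The generator `e3` of `U_q^+(B_2)`. -/
def Ue3 : UqB2 K q := RingQuot.mkAlgHom K (UqB2Rel K q) (FreeAlgebra.ι K 2)
/-- The generator `z` of `U_q^+(B_2)`. -/
def Uz : UqB2 K q := RingQuot.mkAlgHom K (UqB2Rel K q) (FreeAlgebra.ι K 3)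


/-- The element `z1 = e1·e2·e3 + (1/(q^2-1))·e1·z + (1/(q^4-1))·e3^2` of `U_q^+(B_2)`. -/
def Uz1 : UqB2 K q :=
  Ue1 K q * Ue2 K q * Ue3 K q + (q ^ 2 - 1)⁻¹ • (Ue1 K q * Uz K q) +
    (q ^ 4 - 1)⁻¹ • Ue3 K q ^ 2

section Rels

lemma Urel_e1z : Ue1 K q * Uz K q = Uz K q * Ue1 K q := by
  simpa only [Ue1, Uz, map_mul] using RingQuot.mkAlgHom_rel K UqB2Rel.e1z

lemma Urel_e2z : Ue2 K q * Uz K q = Uz K q * Ue2 K q := by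
  simpa only [Ue2, Uz, map_mul] using RingQuot.mkAlgHom_rel K UqB2Rel.e2z

lemma Urel_e3z : Ue3 K q * Uz K q = Uz K q * Ue3 K q := by
  simpa only [Ue3, Uz, map_mul] using RingQuot.mkAlgHom_rel K UqB2Rel.e3z

lemma Urel_e1e3 : Ue1 K q * Ue3 K q = q⁻¹ ^ 2 • (Ue3 K q * Ue1 K q) := by
  simpa only [Ue1, Ue3, map_mul, map_smul] using RingQuot.mkAlgHom_rel K (UqB2Rel.e1e3 : UqB2Rel K q _ _)

lemma Urel_e2e3 : Ue2 K q * Ue3 K q = q ^ 2 • (Ue3 K q * Ue2 K q) + Uz K q := by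
  simpa only [Ue2, Ue3, Uz, map_mul, map_smul, map_add] using
    RingQuot.mkAlgHom_rel K (UqB2Rel.e2e3 : UqB2Rel K q _ _)

lemma Urel_e2e1 :
    Ue2 K q * Ue1 K q = q⁻¹ ^ 2 • (Ue1 K q * Ue2 K q) - q⁻¹ ^ 2 • Ue3 K q := by
  simpa only [Ue1, Ue2, Ue3, map_mul, map_smul, map_sub] using
    RingQuot.mkAlgHom_rel K (UqB2Rel.e2e1 : UqB2Rel K q _ _)

variable {K q}

lemma Urel_e1z' (x : UqB2 K q) : Ue1 K q * (Uz K q * x) = Uz K q * (Ue1 K q * x) := by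
  rw [← mul_assoc, Urel_e1z, mul_assoc]

lemma Urel_e2z' (x : UqB2 K q) : Ue2 K q * (Uz K q * x) = Uz K q * (Ue2 K q * x) := by
  rw [← mul_assoc, Urel_e2z, mul_assoc]

lemma Urel_e3z' (x : UqB2 K q) : Ue3 K q * (Uz K q * x) = Uz K q * (Ue3 K q * x) := by
  rw [← mul_assoc, Urel_e3z, mul_assoc]

lemma Urel_e1e3' (x : UqB2 K q) :
    Ue1 K q * (Ue3 K q * x) = q⁻¹ ^ 2 • (Ue3 K q * (Ue1 K q * x)) := by
  rw [← mul_assoc, Urel_e1e3, smul_mul_assoc, mul_assoc]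

lemma Urel_e2e3' (x : UqB2 K q) :
    Ue2 K q * (Ue3 K q * x) = q ^ 2 • (Ue3 K q * (Ue2 K q * x)) + Uz K q * x := by
  rw [← mul_assoc, Urel_e2e3, add_mul, smul_mul_assoc, mul_assoc]

lemma Urel_e2e1' (x : UqB2 K q) :
    Ue2 K q * (Ue1 K q * x) =
      q⁻¹ ^ 2 • (Ue1 K q * (Ue2 K q * x)) - q⁻¹ ^ 2 • (Ue3 K q * x) := by
  rw [← mul_assoc, Urel_e2e1, sub_mul, smul_mul_assoc, smul_mul_assoc, mul_assoc]

end Rels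

set_option maxHeartbeats 1600000 in
set_option synthInstance.maxHeartbeats 200000 in
/-- The element `z1` is central in `U_q^+(B_2)`, i.e. it commutes with
each of the generators `e1, e2, e3, z`. -/
theorem stmt18 (m : ℕ) (hm : 5 ≤ m) (hq : IsPrimitiveRoot q m)
    (l : ℕ) (hl : l = if Odd m then m else m / 2) :
    Commute (Uz1 K q) (Ue1 K q) ∧ Commute (Uz1 K q) (Ue2 K q) ∧
      Commute (Uz1 K q) (Ue3 K q) ∧ Commute (Uz1 K q) (Uz K q) := by
  have hq0 : q ≠ 0 := hq.ne_zero (by omega)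
  have hq2 : q ^ 2 - 1 ≠ 0 :=
    sub_ne_zero.mpr (hq.pow_ne_one_of_pos_of_lt (by norm_num) (by omega))
  have hq4 : q ^ 4 - 1 ≠ 0 :=
    sub_ne_zero.mpr (hq.pow_ne_one_of_pos_of_lt (by norm_num) (by omega))
  have ha : -q ^ 2 + q ^ 4 ≠ 0 := by
    have : -q ^ 2 + q ^ 4 = q ^ 2 * (q ^ 2 - 1) := by ring
    rw [this]; exact mul_ne_zero (pow_ne_zero _ hq0) hq2
  have hb : -q ^ 4 + q ^ 8 ≠ 0 := by
    have : -q ^ 4 + q ^ 8 = q ^ 4 * (q ^ 4 - 1) := by ring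
    rw [this]; exact mul_ne_zero (pow_ne_zero _ hq0) hq4
  have hc : -1 + q ^ 2 ≠ 0 := by
    have : -1 + q ^ 2 = q ^ 2 - 1 := by ring
    rw [this]; exact hq2
  have hd : -1 + q ^ 4 ≠ 0 := by
    have : -1 + q ^ 4 = q ^ 4 - 1 := by ring
    rw [this]; exact hq4
  have he : q ^ 4 + (-q ^ 6 - q ^ 8) + q ^ 10 ≠ 0 := by
    have : q ^ 4 + (-q ^ 6 - q ^ 8) + q ^ 10 = q ^ 4 * (q ^ 2 - 1) * (q ^ 4 - 1) := by ring
    rw [this]; exact mul_ne_zero (mul_ne_zero (pow_ne_zero _ hq0) hq2) hq4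
  refine ⟨?_, ?_, ?_, ?_⟩
  · show _ * _ = _ * _
    simp only [Uz1, pow_two, add_mul, mul_add, sub_mul, mul_sub, smul_mul_assoc,
      mul_smul_comm, smul_add, smul_sub, smul_smul, mul_assoc,
      Urel_e1z, Urel_e2z, Urel_e3z, Urel_e1e3, Urel_e2e3, Urel_e2e1,
      Urel_e1z', Urel_e2z', Urel_e3z', Urel_e1e3', Urel_e2e3', Urel_e2e1']
    try match_scalars
    all_goals try ring
    all_goals try field_simp
    all_goals try ring
    all_goals try field_simp
    all_goals try ring
  · show _ * _ = _ * _
    simp only [Uz1, pow_two, add_mul, mul_add, sub_mul, mul_sub, smul_mul_assoc,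
      mul_smul_comm, smul_add, smul_sub, smul_smul, mul_assoc,
      Urel_e1z, Urel_e2z, Urel_e3z, Urel_e1e3, Urel_e2e3, Urel_e2e1,
      Urel_e1z', Urel_e2z', Urel_e3z', Urel_e1e3', Urel_e2e3', Urel_e2e1']
    try match_scalars
    all_goals try ring
    all_goals try field_simp
    all_goals try ring
    all_goals try field_simp
    all_goals try ring
  · show _ * _ = _ * _
    simp only [Uz1, pow_two, add_mul, mul_add, sub_mul, mul_sub, smul_mul_assoc,
      mul_smul_comm, smul_add, smul_sub, smul_smul, mul_assoc,
      Urel_e1z, Urel_e2z, Urel_e3z, Urel_e1e3, Urel_e2e3, Urel_e2e1,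
      Urel_e1z', Urel_e2z', Urel_e3z', Urel_e1e3', Urel_e2e3', Urel_e2e1']
    try match_scalars
    all_goals try ring
    all_goals try field_simp
    all_goals try ring
    all_goals try field_simp
    all_goals try ring
  · show _ * _ = _ * _
    simp only [Uz1, pow_two, add_mul, mul_add, sub_mul, mul_sub, smul_mul_assoc,
      mul_smul_comm, smul_add, smul_sub, smul_smul, mul_assoc,
      Urel_e1z, Urel_e2z, Urel_e3z, Urel_e1e3, Urel_e2e3, Urel_e2e1,
      Urel_e1z', Urel_e2z', Urel_e3z', Urel_e1e3', Urel_e2e3', Urel_e2e1']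
    try match_scalars
    all_goals try ring
    all_goals try field_simp
    all_goals try ring
    all_goals try field_simp
    all_goals try ring
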